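/- arXiv:2112.01884 — 3 statements merged into one kernel-verified Lean document; each statement's English description precedes it below -/
import Mathlib

section
/- Let A, B be two distinct 2-stable k-subsets of {1,...,n} with |A ∩ B| = 1, where n ≥ 2k+2. Then the distance between A and B in SG(n,k) is 2 or 3. -/
/-- The cycle graph `C_n` on vertex set `ZMod n` (representing `{1,…,n}` cyclically). -/
def CycleGraph (n : ℕ) : SimpleGraph (ZMod n) where
  Adj i j := i ≠ j ∧ (i + 1 = j ∨ j + 1 = i)
  symm := ⟨fun i j ⟨h, h2⟩ => ⟨h.symm, h2.symm⟩⟩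
  loopless := ⟨fun i ⟨h, _⟩ => h rfl⟩

/-- A subset of `ZMod n` is 2-stable if it contains no two cyclically consecutive elements. -/
def Stable2 (n : ℕ) (S : Finset (ZMod n)) : Prop := ∀ i ∈ S, i + 1 ∉ S

/-- Vertices of the Schrijver graph: 2-stable `k`-subsets of `{1,…,n}`. -/
def SGVert (n k : ℕ) : Type := {S : Finset (ZMod n) // S.card = k ∧ Stable2 n S}

/-- The Schrijver graph `SG(n,k)`: 2-stable `k`-subsets, adjacent iff disjoint. -/
def SG (n k : ℕ) : SimpleGraph (SGVert n k) where
  Adj A B := A ≠ B ∧ Disjoint A.1 B.1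
  symm := ⟨fun A B ⟨h, h2⟩ => ⟨h.symm, h2.symm⟩⟩
  loopless := ⟨fun A ⟨h, _⟩ => h rfl⟩

/-!
Let `A ∩ B = {x}`. Since `x - 2 ≠ x`, one of `A`, `B`, say `A`, misses `x - 2`. The shift
`C = A + 1` is 2-stable and disjoint from `A`, and `D = (A \ {x}) ∪ {x - 1}` is 2-stable (as
`x - 2 ∉ A`) and disjoint from `B`. Moreover `C` and `D` are disjoint, since `x - 1 = a + 1` would
put `x - 2` into `A`. So `A — C — D — B` is a walk, while `A ≠ B` are not adjacent.
-/

open Finset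

lemma ZMod.two_ne_zero_of_three_le {n : ℕ} (hn : 3 ≤ n) : (2 : ZMod n) ≠ 0 := fun h => by
  have := Nat.le_of_dvd two_pos ((ZMod.natCast_eq_zero_iff 2 n).mp (by exact_mod_cast h))
  omega

lemma SimpleGraph.dist_eq_two_or_three_of_adj_adj_adj {V : Type*} {G : SimpleGraph V}
    {a b c d : V} (hne : a ≠ d) (hnadj : ¬ G.Adj a d)
    (hab : G.Adj a b) (hbc : G.Adj b c) (hcd : G.Adj c d) :
    G.dist a d = 2 ∨ G.dist a d = 3 := by
  let w : G.Walk a d := .cons hab (.cons hbc hcd.toWalk)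
  have hle : G.dist a d ≤ 3 := dist_le w
  have hlt : 1 < G.dist a d := Reachable.one_lt_dist_of_ne_of_not_adj ⟨w⟩ hne hnadj
  omega

namespace Stable2

variable {n : ℕ} {S : Finset (ZMod n)} {x : ZMod n}

lemma sub_one_notMem (hS : Stable2 n S) (hx : x ∈ S) : x - 1 ∉ S := fun h =>
  hS _ h (by rwa [sub_add_cancel])

lemma image_add_one (hS : Stable2 n S) : Stable2 n (S.image (· + 1)) := by
  rintro _ ha' hb'
  obtain ⟨a, ha, rfl⟩ := mem_image.mp ha'
  obtain ⟨b, hb, hba⟩ := mem_image.mp hb'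
  exact hS a ha (add_right_cancel hba ▸ hb)

lemma disjoint_image_add_one (hS : Stable2 n S) : Disjoint S (S.image (· + 1)) := by
  simp only [disjoint_right, forall_mem_image]
  exact hS

lemma insert_sub_one_erase (hS : Stable2 n S) (hx : x ∈ S) (hx2 : x - 2 ∉ S) :
    Stable2 n (insert (x - 1) (S.erase x)) := by
  intro y hy hy1
  simp only [mem_insert, mem_erase] at hy hy1
  rcases hy with rfl | ⟨-, hy⟩
  · rcases hy1 with h | ⟨h, -⟩
    · exact hS x hx (by rwa [show x + 1 = x by linear_combination h])
    · exact h (sub_add_cancel x 1)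
  · rcases hy1 with h | ⟨-, h⟩
    · exact hx2 (by rwa [show x - 2 = y by linear_combination -h])
    · exact hS y hy h

lemma disjoint_image_add_one_insert_sub_one_erase (hS : Stable2 n S) (hx2 : x - 2 ∉ S) :
    Disjoint (S.image (· + 1)) (insert (x - 1) (S.erase x)) := by
  simp only [disjoint_left, forall_mem_image, mem_insert, mem_erase, not_or]
  intro a ha
  refine ⟨fun h => hx2 ?_, fun h => hS a ha h.2⟩
  rwa [show x - 2 = a by linear_combination -h]

end Stable2

namespace SG

variable {n k : ℕ}

lemma adj_of_disjoint {A B : SGVert n k} (hk : 0 < k) (h : Disjoint A.1 B.1) :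
    (SG n k).Adj A B := by
  refine ⟨fun hAB => ?_, h⟩
  subst hAB
  have hA : A.1.Nonempty := card_pos.mp (by rwa [A.2.1])
  exact hA.ne_empty (disjoint_self.mp h)

lemma exists_adj_adj_adj_of_inter_eq_singleton {A B : SGVert n k} {x : ZMod n}
    (hAB : A.1 ∩ B.1 = {x}) (hx2 : x - 2 ∉ A.1) :
    ∃ C D, (SG n k).Adj A C ∧ (SG n k).Adj C D ∧ (SG n k).Adj D B := by
  have hx : x ∈ A.1 ∩ B.1 := hAB ▸ mem_singleton_self x
  rw [mem_inter] at hx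
  obtain ⟨hAcard, hA⟩ := A.2
  have hk : 0 < k := hAcard ▸ card_pos.mpr ⟨x, hx.1⟩
  let C : SGVert n k :=
    ⟨A.1.image (· + 1), (card_image_of_injective _ (add_left_injective 1)).trans hAcard,
      hA.image_add_one⟩
  let D : SGVert n k :=
    ⟨insert (x - 1) (A.1.erase x), by
      rw [card_insert_of_notMem fun h => hA.sub_one_notMem hx.1 (mem_of_mem_erase h),
        card_erase_add_one hx.1, hAcard],
      hA.insert_sub_one_erase hx.1 hx2⟩
  have hDB : Disjoint D.1 B.1 := by
    refine disjoint_insert_left.mpr ⟨B.2.2.sub_one_notMem hx.2, ?_⟩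
    rw [disjoint_iff_inter_eq_empty, erase_inter, hAB, erase_singleton]
  exact ⟨C, D, adj_of_disjoint hk hA.disjoint_image_add_one,
    adj_of_disjoint hk (hA.disjoint_image_add_one_insert_sub_one_erase hx2),
    adj_of_disjoint hk hDB⟩

end SG

theorem stmt2 (n k : ℕ) (hn : 2 * k + 2 ≤ n) (A B : SGVert n k) (hne : A ≠ B)
    (hcap : (A.1 ∩ B.1).card = 1) :
    (SG n k).dist A B = 2 ∨ (SG n k).dist A B = 3 := by
  obtain ⟨x, hx⟩ := card_eq_one.mp hcap
  have hxA : x ∈ A.1 := (mem_inter.mp (hx ▸ mem_singleton_self x)).1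
  have hk : 0 < k := A.2.1 ▸ card_pos.mpr ⟨x, hxA⟩
  have hnadj : ¬ (SG n k).Adj A B := fun h => by
    simp [disjoint_iff_inter_eq_empty.mp h.2] at hcap
  by_cases hx2 : x - 2 ∈ A.1
  · have hx2B : x - 2 ∉ B.1 := fun h => ZMod.two_ne_zero_of_three_le (by omega : 3 ≤ n) <| by
      have hmem := mem_inter.mpr ⟨hx2, h⟩
      rw [hx, mem_singleton] at hmem
      linear_combination -hmem
    obtain ⟨C, D, hBC, hCD, hDA⟩ :=
      SG.exists_adj_adj_adj_of_inter_eq_singleton (inter_comm A.1 B.1 ▸ hx) hx2B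
    rw [SimpleGraph.dist_comm]
    exact SimpleGraph.dist_eq_two_or_three_of_adj_adj_adj hne.symm (fun h => hnadj h.symm)
      hBC hCD hDA
  · obtain ⟨C, D, hAC, hCD, hDB⟩ := SG.exists_adj_adj_adj_of_inter_eq_singleton hx hx2
    exact SimpleGraph.dist_eq_two_or_three_of_adj_adj_adj hne hnadj hAC hCD hDB
end

section
/- Let A, B be distinct vertices of SG(n,k) with A ∩ B ≠ ∅ and X = A ∪ B. Then the number of connected components C of the subgraph of C_n induced by X satisfying |C ∩ (A\B)| ≥ 1 and |C ∩ (B\A)| = 0 ('A-components', where intersection is taken with the endpoints of C) equals the number of components with |C ∩ (B\A)| ≥ 1 and |C ∩ (A\B)| = 0 when intersections are restricted to end-vertices of the components. -/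
/-!
Give each point the weight `+1` on `A \ B`, `-1` on `B \ A` and `0` elsewhere; its total over
`X = A ∪ B` is `|A| - |B| = 0`. Since `A` and `B` are 2-stable, cyclically consecutive points of
`X` have opposite weights, so weighting every point of `X` by the number of its two cycle
neighbours missing from `X` again gives total `0`. Unless `X` is the whole cycle (then there are no
ends), every component of `X` has exactly one right end `p` (`p + 1 ∉ X`) and one left end `q`
(`q - 1 ∉ X`): the last point of the run `ℓ, ℓ + 1, ℓ + 2, …` in `X` does not change along edges.
A point of `A ∩ B` has no neighbour in `X`, so it is both ends of its component; hence a component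
contributes `2` if it is an `A`-component, `-2` if it is a `B`-component and `0` otherwise.
-/

open SimpleGraph Finset

variable {n : ℕ}

abbrev inducedCycle (X : Finset (ZMod n)) : SimpleGraph (X : Set (ZMod n)) :=
  (CycleGraph n).induce X

section Runs

variable {X : Finset (ZMod n)} {e : ZMod n}

lemma CycleGraph.eq_add_or_eq_add_of_adj (he : e = 1 ∨ e = -1) {u v : ZMod n}
    (h : (CycleGraph n).Adj u v) : v = u + e ∨ u = v + e := by
  rcases he with rfl | rfl <;> rcases h.2 with h | h
  exacts [.inl h.symm, .inr h.symm, .inr (by rw [← h]; ring), .inl (by rw [← h]; ring)]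

lemma inducedCycle_reachable_add (he : e = 1 ∨ e = -1) {ℓ : ZMod n} (h : ℓ ∈ X)
    (h' : ℓ + e ∈ X) : (inducedCycle X).Reachable ⟨ℓ, h⟩ ⟨ℓ + e, h'⟩ := by
  by_cases hne : ℓ = ℓ + e
  · convert Reachable.refl _ using 2
    exact hne.symm
  refine Adj.reachable ⟨hne, ?_⟩
  rcases he with rfl | rfl
  exacts [.inl rfl, .inr (show ℓ + -1 + 1 = ℓ by ring)]

lemma inducedCycle_reachable_add_nsmul (he : e = 1 ∨ e = -1) {ℓ : ZMod n} :
    ∀ (m : ℕ) (h : ∀ j ≤ m, ℓ + j • e ∈ X),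
      (inducedCycle X).Reachable ⟨ℓ, by simpa using h 0⟩ ⟨ℓ + m • e, h m le_rfl⟩
  | 0, _ => by convert Reachable.refl _ using 2; simp
  | m + 1, h => by
    refine (inducedCycle_reachable_add_nsmul he m fun j hj => h j (by omega)).trans ?_
    simp_rw [succ_nsmul, ← add_assoc]
    exact inducedCycle_reachable_add he _ _

lemma exists_add_succ_nsmul_notMem {x₀ : ZMod n} (hx₀ : x₀ ∉ X) (he : e = 1 ∨ e = -1)
    (ℓ : ZMod n) : ∃ m : ℕ, ℓ + (m + 1) • e ∉ X := by
  have he2 : e * e = 1 := by rcases he with rfl | rfl <;> ring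
  cases n with
  | zero =>
    by_contra! hall
    refine X.finite_toSet.not_infinite (Set.infinite_of_injective_forall_mem ?_ hall)
    intro a b hab
    have := congrArg (· * e) (add_left_cancel hab)
    simp only [nsmul_eq_mul, mul_assoc, he2, mul_one] at this
    exact Nat.succ_injective (by exact_mod_cast this)
  | succ k =>
    refine ⟨((x₀ - ℓ) * e).val + k, ?_⟩
    convert hx₀ using 2
    rw [add_assoc, add_nsmul, nsmul_eq_mul, nsmul_eq_mul, ZMod.natCast_zmod_val,
      show ((k + 1 : ℕ) : ZMod (k + 1)) = 0 from ZMod.natCast_self _]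
    linear_combination (x₀ - ℓ) * he2

end Runs

section RunEnd

variable {X : Finset (ZMod n)} {e : ZMod n} (hX : ∀ ℓ : ZMod n, ∃ m : ℕ, ℓ + (m + 1) • e ∉ X)

open Classical

noncomputable def runEnd (ℓ : ZMod n) : ZMod n := ℓ + Nat.find (hX ℓ) • e

lemma runEnd_add_notMem (ℓ : ZMod n) : runEnd hX ℓ + e ∉ X := by
  have := Nat.find_spec (hX ℓ)
  rwa [succ_nsmul, ← add_assoc] at this

lemma runEnd_of_add_notMem {ℓ : ZMod n} (h : ℓ + e ∉ X) : runEnd hX ℓ = ℓ := by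
  have : Nat.find (hX ℓ) = 0 := (Nat.find_eq_zero _).mpr (by simpa using h)
  rw [runEnd, this, zero_nsmul, add_zero]

lemma find_eq_find_add_one {ℓ : ZMod n} (h : ℓ + e ∈ X) :
    Nat.find (hX ℓ) = Nat.find (hX (ℓ + e)) + 1 := by
  rw [Nat.find_eq_iff]
  refine ⟨?_, fun k hk => ?_⟩
  · have := Nat.find_spec (hX (ℓ + e))
    rwa [add_assoc, ← succ_nsmul'] at this
  · cases k with
    | zero => simpa using h
    | succ k =>
      have := Nat.find_min (hX (ℓ + e)) (by omega : k < _)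
      rwa [add_assoc, ← succ_nsmul'] at this

lemma runEnd_add {ℓ : ZMod n} (h : ℓ + e ∈ X) : runEnd hX (ℓ + e) = runEnd hX ℓ := by
  rw [runEnd, runEnd, find_eq_find_add_one hX h, succ_nsmul', add_assoc]

variable (he : e = 1 ∨ e = -1)
include hX he

lemma runEnd_eq_of_reachable {u v : (X : Set (ZMod n))} (h : (inducedCycle X).Reachable u v) :
    runEnd hX u = runEnd hX v := by
  rw [reachable_iff_reflTransGen] at h
  induction h with
  | refl => rfl
  | @tail w w' _ hadj ih =>
    rw [ih]
    rcases CycleGraph.eq_add_or_eq_add_of_adj he (u := w) (v := w') hadj with h | h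
    · rw [h, runEnd_add hX (h ▸ w'.2)]
    · rw [h, runEnd_add hX (h ▸ w.2)]

lemma exists_reachable_runEnd (v : (X : Set (ZMod n))) :
    ∃ w : (X : Set (ZMod n)), (w : ZMod n) = runEnd hX v ∧ (inducedCycle X).Reachable v w := by
  have hrun : ∀ j ≤ Nat.find (hX v), ↑v + j • e ∈ X := by
    rintro (_ | j) hj
    · simp
    · simpa using Nat.find_min (hX v) (by omega : j < _)
  exact ⟨_, rfl, inducedCycle_reachable_add_nsmul he _ hrun⟩

lemma exists_unique_end (C : (inducedCycle X).ConnectedComponent) :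
    ∃ p, (inducedCycle X).connectedComponentMk p = C ∧
      ∀ v, (inducedCycle X).connectedComponentMk v = C → ((v : ZMod n) + e ∉ X ↔ v = p) := by
  obtain ⟨v, rfl⟩ := C.exists_rep
  obtain ⟨p, hp, hvp⟩ := exists_reachable_runEnd hX he v
  refine ⟨p, (ConnectedComponent.sound hvp).symm, fun u hu => ⟨fun hue => Subtype.ext ?_, ?_⟩⟩
  · calc (u : ZMod n) = runEnd hX u := (runEnd_of_add_notMem hX hue).symm
      _ = runEnd hX v := runEnd_eq_of_reachable hX he (ConnectedComponent.exact hu)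
      _ = p := hp.symm
  · rintro rfl
    exact hp ▸ runEnd_add_notMem hX v

end RunEnd

section Weight

variable {A B : Finset (ZMod n)}

def weight (A B : Finset (ZMod n)) (ℓ : ZMod n) : ℤ :=
  (if ℓ ∈ A then 1 else 0) - if ℓ ∈ B then 1 else 0

lemma sum_weight_union : ∑ ℓ ∈ A ∪ B, weight A B ℓ = #A - #B := by
  simp only [weight, sum_sub_distrib, sum_boole, filter_mem_eq_inter, union_inter_cancel_left,
    union_inter_cancel_right]

lemma weight_add_weight_add_one (hA : Stable2 n A) (hB : Stable2 n B) {ℓ : ZMod n}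
    (h : ℓ ∈ A ∪ B) (h' : ℓ + 1 ∈ A ∪ B) : weight A B ℓ + weight A B (ℓ + 1) = 0 := by
  have hA' := hA ℓ
  have hB' := hB ℓ
  rw [mem_union] at h h'
  unfold weight
  split_ifs <;> simp_all

def endWeight (A B : Finset (ZMod n)) (ℓ : ZMod n) : ℤ :=
  (if ℓ + 1 ∉ A ∪ B then weight A B ℓ else 0) + if ℓ - 1 ∉ A ∪ B then weight A B ℓ else 0

lemma sum_endWeight (hA : Stable2 n A) (hB : Stable2 n B) :
    ∑ ℓ ∈ A ∪ B, endWeight A B ℓ = 2 * (#A - #B) := by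
  have hshift : ∑ ℓ ∈ A ∪ B with ℓ - 1 ∈ A ∪ B, weight A B ℓ =
      ∑ ℓ ∈ A ∪ B with ℓ + 1 ∈ A ∪ B, weight A B (ℓ + 1) :=
    sum_nbij' (· - 1) (· + 1) (by simp +contextual) (by simp +contextual) (by simp) (by simp)
      (by simp)
  have hpairs : ∑ ℓ ∈ A ∪ B with ℓ + 1 ∈ A ∪ B, (weight A B ℓ + weight A B (ℓ + 1)) = 0 :=
    sum_eq_zero fun ℓ hℓ =>
      weight_add_weight_add_one hA hB (mem_filter.mp hℓ).1 (mem_filter.mp hℓ).2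
  rw [sum_add_distrib] at hpairs
  simp only [endWeight, sum_add_distrib, ← sum_filter]
  linarith [sum_filter_add_sum_filter_not (A ∪ B) (· + 1 ∈ A ∪ B) (weight A B),
    sum_filter_add_sum_filter_not (A ∪ B) (· - 1 ∈ A ∪ B) (weight A B),
    sum_weight_union (A := A) (B := B)]

lemma weight_add_weight_eq {p q : ZMod n} (hp : p ∈ A ∪ B) (hq : q ∈ A ∪ B)
    (hpq : p ∈ A ∩ B ↔ q ∈ A ∩ B) :
    weight A B p + weight A B q =
      2 * (if (p ∈ A \ B ∨ q ∈ A \ B) ∧ ¬(p ∈ B \ A ∨ q ∈ B \ A) then 1 else 0) -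
        2 * (if (p ∈ B \ A ∨ q ∈ B \ A) ∧ ¬(p ∈ A \ B ∨ q ∈ A \ B) then 1 else 0) := by
  simp only [mem_union, mem_inter, mem_sdiff] at hp hq hpq ⊢
  unfold weight
  split_ifs <;> simp_all

end Weight

section Components

variable {X : Finset (ZMod n)}

def HasEndIn (X S : Finset (ZMod n)) (C : (inducedCycle X).ConnectedComponent) : Prop :=
  ∃ ℓ, ∃ hℓ : ℓ ∈ (X : Set (ZMod n)), (inducedCycle X).connectedComponentMk ⟨ℓ, hℓ⟩ = C ∧
    (ℓ ∈ (X : Set (ZMod n)) ∧ (ℓ + 1 ∉ (X : Set (ZMod n)) ∨ ℓ - 1 ∉ (X : Set (ZMod n)))) ∧ ℓ ∈ S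

lemma not_hasEndIn_of_forall_mem (hX : ∀ x, x ∈ X) (S : Finset (ZMod n))
    (C : (inducedCycle X).ConnectedComponent) : ¬ HasEndIn X S C := by
  rintro ⟨ℓ, -, -, ⟨-, h⟩, -⟩
  exact h.elim (· (hX _)) (· (hX _))

lemma hasEndIn_iff {S : Finset (ZMod n)} {C : (inducedCycle X).ConnectedComponent}
    {p q : (X : Set (ZMod n))} (hpC : (inducedCycle X).connectedComponentMk p = C)
    (hp : ∀ v, (inducedCycle X).connectedComponentMk v = C → ((v : ZMod n) + 1 ∉ X ↔ v = p))
    (hqC : (inducedCycle X).connectedComponentMk q = C)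
    (hq : ∀ v, (inducedCycle X).connectedComponentMk v = C → ((v : ZMod n) - 1 ∉ X ↔ v = q)) :
    HasEndIn X S C ↔ (p : ZMod n) ∈ S ∨ (q : ZMod n) ∈ S := by
  constructor
  · rintro ⟨ℓ, hℓ, hC, ⟨-, h | h⟩, hS⟩
    · exact .inl ((hp _ hC).mp h ▸ hS)
    · exact .inr ((hq _ hC).mp h ▸ hS)
  · rintro (h | h)
    · exact ⟨p, p.2, hpC, ⟨p.2, .inl ((hp p hpC).mpr rfl)⟩, h⟩
    · exact ⟨q, q.2, hqC, ⟨q.2, .inr ((hq q hqC).mpr rfl)⟩, h⟩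

end Components

lemma Stable2.add_one_sub_one_notMem_union {A B : Finset (ZMod n)} (hA : Stable2 n A) (hB : Stable2 n B)
    {ℓ : ZMod n} (h : ℓ ∈ A ∩ B) : ℓ + 1 ∉ A ∪ B ∧ ℓ - 1 ∉ A ∪ B := by
  rw [mem_inter] at h
  simp only [mem_union, not_or]
  exact ⟨⟨hA ℓ h.1, hB ℓ h.2⟩,
    fun h' => hA _ h' (by simpa using h.1), fun h' => hB _ h' (by simpa using h.2)⟩

open Classical in
lemma sum_endWeight_component {A B : Finset (ZMod n)} (hA : Stable2 n A) (hB : Stable2 n B)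
    {x₀ : ZMod n} (hx₀ : x₀ ∉ A ∪ B) (C : (inducedCycle (A ∪ B)).ConnectedComponent) :
    ∑ v with (inducedCycle (A ∪ B)).connectedComponentMk v = C, endWeight A B v =
      2 * (if HasEndIn (A ∪ B) (A \ B) C ∧ ¬ HasEndIn (A ∪ B) (B \ A) C then 1 else 0) -
        2 * (if HasEndIn (A ∪ B) (B \ A) C ∧ ¬ HasEndIn (A ∪ B) (A \ B) C then 1 else 0) := by
  obtain ⟨p, hpC, hp⟩ :=
    exists_unique_end (exists_add_succ_nsmul_notMem hx₀ (.inl rfl)) (.inl rfl) C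
  obtain ⟨q, hqC, hq⟩ :=
    exists_unique_end (exists_add_succ_nsmul_notMem hx₀ (.inr rfl)) (.inr rfl) C
  simp only [← sub_eq_add_neg] at hq
  have hsum : ∀ (P : ZMod n → Prop) [DecidablePred P] (r : (↑(A ∪ B) : Set (ZMod n))),
      (inducedCycle (A ∪ B)).connectedComponentMk r = C →
      (∀ v, (inducedCycle (A ∪ B)).connectedComponentMk v = C → (P v ↔ v = r)) →
      ∑ v with (inducedCycle (A ∪ B)).connectedComponentMk v = C,
        (if P v then weight A B v else 0) = weight A B r := by
    intro P _ r hrC hr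
    rw [sum_congr rfl fun v hv => if_congr (hr v (mem_filter.mp hv).2) rfl rfl, sum_ite_eq']
    simp [hrC]
  have hpq : (p : ZMod n) ∈ A ∩ B ↔ (q : ZMod n) ∈ A ∩ B :=
    ⟨fun h => (hq p hpC).mp (hA.add_one_sub_one_notMem_union hB h).2 ▸ h,
      fun h => (hp q hqC).mp (hA.add_one_sub_one_notMem_union hB h).1 ▸ h⟩
  have hends : ∑ v with (inducedCycle (A ∪ B)).connectedComponentMk v = C, endWeight A B v =
      weight A B p + weight A B q := by
    rw [← hsum (· + 1 ∉ A ∪ B) p hpC hp, ← hsum (· - 1 ∉ A ∪ B) q hqC hq, ← sum_add_distrib]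
    rfl
  rw [hends, hasEndIn_iff hpC hp hqC hq, hasEndIn_iff hpC hp hqC hq]
  convert weight_add_weight_eq p.2 q.2 hpq

theorem card_hasEndIn_sdiff_eq {A B : Finset (ZMod n)} (hA : Stable2 n A) (hB : Stable2 n B)
    (hcard : #A = #B) :
    Nat.card {C // HasEndIn (A ∪ B) (A \ B) C ∧ ¬ HasEndIn (A ∪ B) (B \ A) C} =
      Nat.card {C // HasEndIn (A ∪ B) (B \ A) C ∧ ¬ HasEndIn (A ∪ B) (A \ B) C} := by
  classical
  by_cases hfull : ∀ x, x ∈ A ∪ B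
  · simp [not_hasEndIn_of_forall_mem hfull]
  obtain ⟨x₀, hx₀⟩ := not_forall.mp hfull
  set G := inducedCycle (A ∪ B)
  have htotal : (0 : ℤ) = 2 * #{C | HasEndIn (A ∪ B) (A \ B) C ∧ ¬ HasEndIn (A ∪ B) (B \ A) C} -
      2 * #{C | HasEndIn (A ∪ B) (B \ A) C ∧ ¬ HasEndIn (A ∪ B) (A \ B) C} := by
    calc (0 : ℤ) = ∑ ℓ ∈ A ∪ B, endWeight A B ℓ := by
          rw [sum_endWeight hA hB, hcard, sub_self, mul_zero]
      _ = ∑ v : (↑(A ∪ B) : Set (ZMod n)), endWeight A B v := (sum_coe_sort _ _).symm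
      _ = ∑ C, ∑ v with G.connectedComponentMk v = C, endWeight A B v :=
          (sum_fiberwise _ _ _).symm
      _ = _ := by
        rw [sum_congr rfl fun C _ => sum_endWeight_component hA hB hx₀ C, sum_sub_distrib,
          ← mul_sum, ← mul_sum, sum_boole, sum_boole]
  rw [Nat.card_eq_fintype_card, Nat.card_eq_fintype_card, Fintype.card_subtype,
    Fintype.card_subtype]
  omega

theorem stmt10_general (n k : ℕ) (A B : SGVert n k) :
    let X : Set (ZMod n) := ↑(A.1 ∪ B.1)
    let G := (CycleGraph n).induce X
    let isEnd : ZMod n → Prop := fun ℓ => ℓ ∈ X ∧ (ℓ + 1 ∉ X ∨ ℓ - 1 ∉ X)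
    let hasAEnd : G.ConnectedComponent → Prop := fun C =>
      ∃ ℓ, ∃ hℓ : ℓ ∈ X, G.connectedComponentMk ⟨ℓ, hℓ⟩ = C ∧ isEnd ℓ ∧ ℓ ∈ A.1 \ B.1
    let hasBEnd : G.ConnectedComponent → Prop := fun C =>
      ∃ ℓ, ∃ hℓ : ℓ ∈ X, G.connectedComponentMk ⟨ℓ, hℓ⟩ = C ∧ isEnd ℓ ∧ ℓ ∈ B.1 \ A.1
    Nat.card {C : G.ConnectedComponent // hasAEnd C ∧ ¬ hasBEnd C} =
      Nat.card {C : G.ConnectedComponent // hasBEnd C ∧ ¬ hasAEnd C} :=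
  card_hasEndIn_sdiff_eq A.2.2 B.2.2 (A.2.1.trans B.2.1.symm)

theorem stmt10 (n k : ℕ) (A B : SGVert n k) (hne : A ≠ B) (h : (A.1 ∩ B.1).Nonempty) :
    let X : Set (ZMod n) := ↑(A.1 ∪ B.1)
    let G := (CycleGraph n).induce X
    let isEnd : ZMod n → Prop := fun ℓ => ℓ ∈ X ∧ (ℓ + 1 ∉ X ∨ ℓ - 1 ∉ X)
    let hasAEnd : G.ConnectedComponent → Prop := fun C =>
      ∃ ℓ, ∃ hℓ : ℓ ∈ X, G.connectedComponentMk ⟨ℓ, hℓ⟩ = C ∧ isEnd ℓ ∧ ℓ ∈ A.1 \ B.1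
    let hasBEnd : G.ConnectedComponent → Prop := fun C =>
      ∃ ℓ, ∃ hℓ : ℓ ∈ X, G.connectedComponentMk ⟨ℓ, hℓ⟩ = C ∧ isEnd ℓ ∧ ℓ ∈ B.1 \ A.1
    Nat.card {C : G.ConnectedComponent // hasAEnd C ∧ ¬ hasBEnd C} =
      Nat.card {C : G.ConnectedComponent // hasBEnd C ∧ ¬ hasAEnd C} :=
  stmt10_general n k A B
end

section
/- Every vertex A of SG(2k+2,k) whose complement (in the (2k+2)-cycle) has a connected component of order 3 has degree exactly k + 2 in SG(2k+2,k); every other vertex of SG(2k+2,k) has degree exactly 4. -/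
/-!
The complement `T` of a vertex `A` has `k + 2` elements and contains exactly two edges
`{t, t + 1}` of the cycle, because `A` and `A - 1` are disjoint `k`-sets. The neighbours of `A`
are the sets `T \ S` with `S` a `2`-subset of `T` meeting both edges. If the two edges share a
vertex, i.e. `T` contains a run `x, x + 1, x + 2`, then `S` contains `x + 1` or equals
`{x, x + 2}`: `k + 2` choices. Otherwise `S` takes one endpoint of each edge: `4` choices.
Such a run is a component of order `3`, and without one every component has at most two vertices.
-/

open Finset

section Counting

variable {α : Type*} [DecidableEq α]

lemma card_powersetCard_two_meeting_disjoint {T P Q : Finset α} (hP : P ⊆ T) (hQ : Q ⊆ T)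
    (hPQ : Disjoint P Q) :
    #{S ∈ T.powersetCard 2 | (∃ p ∈ P, p ∈ S) ∧ ∃ q ∈ Q, q ∈ S} = #P * #Q := by
  have hne {p q : α} (hp : p ∈ P) (hq : q ∈ Q) : p ≠ q :=
    fun h => disjoint_left.mp hPQ hp (h ▸ hq)
  rw [← card_product]
  symm
  refine card_bij (fun pq _ => {pq.1, pq.2}) ?_ ?_ ?_
  · rintro ⟨p, q⟩ hpq
    rw [mem_product] at hpq
    simp only [mem_filter, mem_powersetCard]
    exact ⟨⟨insert_subset (hP hpq.1) (singleton_subset_iff.mpr (hQ hpq.2)),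
      card_pair (hne hpq.1 hpq.2)⟩, ⟨p, hpq.1, by simp⟩, ⟨q, hpq.2, by simp⟩⟩
  · rintro ⟨p, q⟩ hpq ⟨p', q'⟩ hpq' h
    simp only [mem_product] at hpq hpq'
    have hp : p ∈ ({p', q'} : Finset α) := h ▸ mem_insert_self p {q}
    have hq : q ∈ ({p', q'} : Finset α) := h ▸ mem_insert_of_mem (mem_singleton_self q)
    simp only [mem_insert, mem_singleton] at hp hq
    rw [Prod.mk.injEq]
    exact ⟨hp.resolve_right (hne hpq.1 hpq'.2), hq.resolve_left (hne hpq'.1 hpq.2).symm⟩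
  · intro S hS
    simp only [mem_filter, mem_powersetCard] at hS
    obtain ⟨⟨-, hS2⟩, ⟨p, hp, hpS⟩, ⟨q, hq, hqS⟩⟩ := hS
    refine ⟨(p, q), mem_product.mpr ⟨hp, hq⟩, eq_of_subset_of_card_le ?_ ?_⟩
    · exact insert_subset hpS (singleton_subset_iff.mpr hqS)
    · rw [hS2, card_pair (hne hp hq)]

lemma card_powersetCard_two_meeting_path {T : Finset α} {x y z : α} (hx : x ∈ T) (hy : y ∈ T)
    (hz : z ∈ T) (hxy : x ≠ y) (hyz : y ≠ z) (hxz : x ≠ z) :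
    #{S ∈ T.powersetCard 2 | (x ∈ S ∨ y ∈ S) ∧ (y ∈ S ∨ z ∈ S)} = #T := by
  have hS : {S ∈ T.powersetCard 2 | (x ∈ S ∨ y ∈ S) ∧ (y ∈ S ∨ z ∈ S)} =
      insert {x, z} ((T.erase y).image fun t => ({t, y} : Finset α)) := by
    ext S
    simp only [mem_filter, mem_powersetCard, mem_insert, mem_image, mem_erase]
    constructor
    · rintro ⟨⟨hST, hS2⟩, hxy', hyz'⟩
      by_cases hyS : y ∈ S
      · right
        obtain ⟨t, ht⟩ := card_eq_one.mp (by rw [card_erase_of_mem hyS, hS2] : #(S.erase y) = 1)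
        have htS : t ∈ S.erase y := ht ▸ mem_singleton_self t
        refine ⟨t, ⟨ne_of_mem_erase htS, hST (mem_of_mem_erase htS)⟩, ?_⟩
        rw [← insert_erase hyS, ht, pair_comm]
      · left
        refine (eq_of_subset_of_card_le ?_ ?_).symm
        · exact insert_subset (hxy'.resolve_right hyS)
            (singleton_subset_iff.mpr (hyz'.resolve_left hyS))
        · rw [hS2, card_pair hxz]
    · rintro (rfl | ⟨t, ⟨hty, htT⟩, rfl⟩)
      · exact ⟨⟨by simp [insert_subset_iff, hx, hz], card_pair hxz⟩, by simp, by simp⟩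
      · exact ⟨⟨by simp [insert_subset_iff, htT, hy], card_pair hty⟩, by simp, by simp⟩
  have hxz_notMem : {x, z} ∉ (T.erase y).image fun t => ({t, y} : Finset α) := by
    simp only [mem_image, mem_erase, not_exists, not_and]
    intro t _ h
    have : y ∈ ({x, z} : Finset α) := h ▸ mem_insert_of_mem (mem_singleton_self y)
    simp [hxy.symm, hyz] at this
  have hinj : Set.InjOn (fun t => ({t, y} : Finset α)) (T.erase y) := by
    intro t ht t' _ h
    exact (insert_inj (by simpa using ne_of_mem_erase ht)).mp h
  rw [hS, card_insert_of_notMem hxz_notMem, card_image_of_injOn hinj, card_erase_of_mem hy]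
  have := card_pos.mpr ⟨y, hy⟩
  omega

end Counting

namespace SimpleGraph

variable {V : Type*} {G : SimpleGraph V}

lemma Reachable.mem_of_adj_mem {s : Set V} (hs : ∀ ⦃u v⦄, u ∈ s → G.Adj u v → v ∈ s)
    {u v : V} (huv : G.Reachable u v) (hu : u ∈ s) : v ∈ s := by
  rw [reachable_iff_reflTransGen] at huv
  induction huv with
  | refl => exact hu
  | tail _ hadj ih => exact hs ih hadj

lemma Reachable.mem_insert_neighborSet (hG : ∀ u, (G.neighborSet u).Subsingleton) {u v : V}
    (huv : G.Reachable u v) : v ∈ insert u (G.neighborSet u) := by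
  rw [reachable_iff_reflTransGen] at huv
  induction huv with
  | refl => exact Set.mem_insert u _
  | tail _ hadj ih =>
    rcases ih with rfl | hadj'
    · exact Set.mem_insert_of_mem _ hadj
    · exact Or.inl (hG _ hadj hadj'.symm)

lemma ConnectedComponent.ncard_supp_le_two (hG : ∀ u, (G.neighborSet u).Subsingleton)
    (C : G.ConnectedComponent) : C.supp.ncard ≤ 2 := by
  obtain ⟨u, rfl⟩ := C.exists_rep
  have hsub : (G.connectedComponentMk u).supp ⊆ insert u (G.neighborSet u) := fun w hw =>
    (ConnectedComponent.exact hw).symm.mem_insert_neighborSet hG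
  calc _ ≤ (insert u (G.neighborSet u)).ncard := Set.ncard_le_ncard hsub ((hG u).finite.insert u)
    _ ≤ (G.neighborSet u).ncard + 1 := Set.ncard_insert_le _ _
    _ ≤ 2 := by
      have : Finite (G.neighborSet u) := (hG u).finite
      have := Set.ncard_le_one_iff_subsingleton.mpr (hG u)
      omega

end SimpleGraph

namespace ZMod

variable {n : ℕ}

lemma natCast_ne_zero_of_lt {m : ℕ} (hm : m ≠ 0) (h : m < n) : (m : ZMod n) ≠ 0 := by
  rw [Ne, natCast_eq_zero_iff]
  exact fun hd => absurd (Nat.le_of_dvd (Nat.pos_of_ne_zero hm) hd) (by omega)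

lemma one_ne_zero_of_one_lt (hn : 1 < n) : (1 : ZMod n) ≠ 0 := by
  exact_mod_cast natCast_ne_zero_of_lt one_ne_zero hn

lemma two_ne_zero_of_two_lt (hn : 2 < n) : (2 : ZMod n) ≠ 0 := by
  exact_mod_cast natCast_ne_zero_of_lt two_ne_zero hn

end ZMod

variable {n : ℕ}

instance : DecidablePred (Stable2 n) := fun S => by unfold Stable2; infer_instance

/-- `t ∈ edgeStarts T` records the edge `{t, t + 1}` of `C_n` inside `T`. -/
def edgeStarts (T : Finset (ZMod n)) : Finset (ZMod n) := {t ∈ T | t + 1 ∈ T}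

lemma mem_edgeStarts {T : Finset (ZMod n)} {t : ZMod n} :
    t ∈ edgeStarts T ↔ t ∈ T ∧ t + 1 ∈ T :=
  mem_filter

def MeetsEdges (E S : Finset (ZMod n)) : Prop := ∀ t ∈ E, t ∈ S ∨ t + 1 ∈ S

instance (E : Finset (ZMod n)) : DecidablePred (MeetsEdges E) := fun S => by
  unfold MeetsEdges; infer_instance

lemma stable2_sdiff_iff {T S : Finset (ZMod n)} :
    Stable2 n (T \ S) ↔ MeetsEdges (edgeStarts T) S := by
  simp only [Stable2, MeetsEdges, mem_edgeStarts, mem_sdiff]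
  grind

lemma edgeStarts_compl [NeZero n] (A : Finset (ZMod n)) :
    edgeStarts Aᶜ = (A ∪ A.map (Equiv.subRight 1).toEmbedding)ᶜ := by
  ext t
  simp [edgeStarts, mem_map_equiv]

lemma card_edgeStarts_compl [NeZero n] {A : Finset (ZMod n)} (hA : Stable2 n A) :
    #(edgeStarts Aᶜ) = n - 2 * #A := by
  have hdisj : Disjoint A (A.map (Equiv.subRight 1).toEmbedding) :=
    disjoint_left.mpr fun a ha ha' => hA a ha (by simpa [mem_map_equiv] using ha')
  rw [edgeStarts_compl, card_compl, card_union_of_disjoint hdisj, card_map, ZMod.card, two_mul]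

lemma card_filter_stable2_powersetCard {T : Finset (ZMod n)} {k m : ℕ} (hT : #T = k + m) :
    #{B ∈ T.powersetCard k | Stable2 n B} =
      #{S ∈ T.powersetCard m | MeetsEdges (edgeStarts T) S} := by
  refine card_nbij' (T \ ·) (T \ ·) ?_ ?_ ?_ ?_
  · intro B hB
    simp only [coe_filter, mem_powersetCard, Set.mem_ofPred_eq] at hB ⊢
    refine ⟨⟨sdiff_subset, by rw [card_sdiff_of_subset hB.1.1]; omega⟩, ?_⟩
    rw [← stable2_sdiff_iff, Finset.sdiff_sdiff_eq_self hB.1.1]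
    exact hB.2
  · intro S hS
    simp only [coe_filter, mem_powersetCard, Set.mem_ofPred_eq] at hS ⊢
    exact ⟨⟨sdiff_subset, by rw [card_sdiff_of_subset hS.1.1]; omega⟩,
      stable2_sdiff_iff.mpr hS.2⟩
  · intro B hB
    exact Finset.sdiff_sdiff_eq_self (mem_powersetCard.mp (mem_filter.mp hB).1).1
  · intro S hS
    exact Finset.sdiff_sdiff_eq_self (mem_powersetCard.mp (mem_filter.mp hS).1).1

lemma SG_adj_iff {k : ℕ} [NeZero n] (hk : k ≠ 0) {A B : SGVert n k} :
    (SG n k).Adj A B ↔ B.1 ⊆ A.1ᶜ := by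
  rw [subset_compl_iff_disjoint_left]
  refine ⟨And.right, fun h => ⟨fun hAB => ?_, h⟩⟩
  obtain ⟨a, ha⟩ : A.1.Nonempty := card_pos.mp (by rw [A.2.1]; omega)
  exact disjoint_left.mp h ha (hAB ▸ ha)

lemma card_neighborSet_SG {k : ℕ} [NeZero n] (hk : k ≠ 0) (A : SGVert n k) :
    Nat.card ((SG n k).neighborSet A) = #{B ∈ A.1ᶜ.powersetCard k | Stable2 n B} := by
  rw [← Nat.card_eq_finsetCard]
  refine Nat.card_congr
    { toFun := fun B => ⟨B.1.1, ?_⟩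
      invFun := fun B => ⟨⟨B.1, ?_⟩, ?_⟩
      left_inv := fun _ => rfl
      right_inv := fun _ => rfl }
  · have := (SG_adj_iff hk).mp B.2
    simp [mem_powersetCard, this, B.1.2.1, B.1.2.2]
  · have := B.2
    simp only [mem_filter, mem_powersetCard] at this
    exact ⟨this.1.2, this.2⟩
  · exact (SG_adj_iff hk).mpr (mem_powersetCard.mp (mem_filter.mp B.2).1).1

lemma cycleGraph_induce_adj {s : Set (ZMod n)} {u v : s} :
    ((CycleGraph n).induce s).Adj u v ↔ u.1 ≠ v.1 ∧ (u.1 + 1 = v.1 ∨ v.1 + 1 = u.1) :=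
  Iff.rfl

lemma cycleGraph_induce_neighborSet_subsingleton {s : Set (ZMod n)}
    (hs : ∀ x ∈ s, x + 1 ∈ s → x + 2 ∉ s) (u : s) :
    (((CycleGraph n).induce s).neighborSet u).Subsingleton := by
  rintro ⟨v, hv⟩ huv ⟨w, hw⟩ huw
  obtain ⟨u, hu⟩ := u
  simp only [SimpleGraph.mem_neighborSet, cycleGraph_induce_adj] at huv huw
  rw [Subtype.mk.injEq]
  -- two distinct neighbours would be `u - 1` and `u + 1`, a run of three starting at `u - 1`
  have := hs (u - 1)
  grind


lemma cycleGraph_induce_card_supp_eq_three (hn : 2 < n) {s : Set (ZMod n)} {x : ZMod n}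
    (hx : x ∈ s) (hx1 : x + 1 ∈ s) (hx2 : x + 2 ∈ s) (hl : x - 1 ∉ s) (hr : x + 3 ∉ s) :
    Nat.card (((CycleGraph n).induce s).connectedComponentMk ⟨x + 1, hx1⟩).supp = 3 := by
  have h1 := ZMod.one_ne_zero_of_one_lt (by omega : 1 < n)
  have h2 := ZMod.two_ne_zero_of_two_lt hn
  have h01 : x ≠ x + 1 := left_ne_add.mpr h1
  have h02 : x ≠ x + 2 := left_ne_add.mpr h2
  have h12 : x + 1 ≠ x + 2 := fun h => h1 (by linear_combination -h)
  have hsupp : (((CycleGraph n).induce s).connectedComponentMk ⟨x + 1, hx1⟩).supp =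
      {⟨x, hx⟩, ⟨x + 1, hx1⟩, ⟨x + 2, hx2⟩} := by
    ext w
    rw [SimpleGraph.ConnectedComponent.mem_supp_iff, SimpleGraph.ConnectedComponent.eq]
    constructor
    · intro hw
      refine hw.symm.mem_of_adj_mem ?_ (by simp)
      -- the run is closed under adjacency because `x - 1, x + 3 ∉ s`
      rintro ⟨u, hu⟩ ⟨v, hv⟩ huR huv
      simp only [Set.mem_insert_iff, Set.mem_singleton_iff, Subtype.mk.injEq,
        cycleGraph_induce_adj] at huR huv ⊢
      grind
    · intro hw
      simp only [Set.mem_insert_iff, Set.mem_singleton_iff] at hw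
      rcases hw with rfl | rfl | rfl
      · exact SimpleGraph.Adj.reachable (by rw [cycleGraph_induce_adj]; grind)
      · rfl
      · exact SimpleGraph.Adj.reachable (by rw [cycleGraph_induce_adj]; grind)
  rw [Nat.card_coe_set_eq, hsupp, Set.ncard_eq_three]
  exact ⟨_, _, _, by simpa using h01, by simpa using h02, by simpa using h12, rfl⟩

lemma maximal_run_of_edgeStarts_eq (hn : 2 < n) {T : Finset (ZMod n)} {x : ZMod n}
    (hE : edgeStarts T = {x, x + 1}) :
    x ∈ T ∧ x + 1 ∈ T ∧ x + 2 ∈ T ∧ x - 1 ∉ T ∧ x + 3 ∉ T := by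
  have h1 := ZMod.one_ne_zero_of_one_lt (by omega : 1 < n)
  have h2 := ZMod.two_ne_zero_of_two_lt hn
  have hE' (t : ZMod n) : t ∈ T ∧ t + 1 ∈ T ↔ t = x ∨ t = x + 1 := by
    rw [← mem_edgeStarts, hE, mem_insert, mem_singleton]
  obtain ⟨hx, hx1⟩ := (hE' x).mpr (Or.inl rfl)
  have hx2 : x + 2 ∈ T := by
    simpa [add_assoc, one_add_one_eq_two] using ((hE' (x + 1)).mpr (Or.inr rfl)).2
  refine ⟨hx, hx1, hx2, fun hl => ?_, fun hr => ?_⟩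
  · rcases (hE' (x - 1)).mp ⟨hl, by simpa using hx⟩ with h | h
    · exact h1 (by linear_combination -h)
    · exact h2 (by linear_combination -h)
  · rcases (hE' (x + 2)).mp ⟨hx2, by rwa [show x + 2 + 1 = x + 3 by ring]⟩ with h | h
    · exact h2 (by linear_combination h)
    · exact h1 (by linear_combination h)

lemma add_two_notMem_of_edgeStarts_eq (hn : 1 < n) {T : Finset (ZMod n)} {e f : ZMod n}
    (hE : edgeStarts T = {e, f}) (hfe : f ≠ e + 1) (hef : e ≠ f + 1) {x : ZMod n}
    (hx : x ∈ T) (hx1 : x + 1 ∈ T) : x + 2 ∉ T := by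
  intro hx2
  have hxE : x ∈ edgeStarts T := mem_edgeStarts.mpr ⟨hx, hx1⟩
  have hx1E : x + 1 ∈ edgeStarts T := mem_edgeStarts.mpr ⟨hx1, by grind⟩
  rw [hE, mem_insert, mem_singleton] at hxE hx1E
  have : x ≠ x + 1 := left_ne_add.mpr (ZMod.one_ne_zero_of_one_lt hn)
  grind

section SchrijverGraph

variable {k : ℕ} (A : SGVert (2 * k + 2) k)

lemma card_compl_SGVert : #A.1ᶜ = k + 2 := by
  rw [card_compl, A.2.1, ZMod.card]
  omega

lemma card_edgeStarts_compl_SGVert : #(edgeStarts A.1ᶜ) = 2 := by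
  rw [card_edgeStarts_compl A.2.2, A.2.1]
  omega

lemma card_neighborSet_SG_eq_card_meetsEdges (hk : 1 ≤ k) :
    Nat.card ((SG (2 * k + 2) k).neighborSet A) =
      #{S ∈ A.1ᶜ.powersetCard 2 | MeetsEdges (edgeStarts A.1ᶜ) S} := by
  rw [card_neighborSet_SG (by omega), card_filter_stable2_powersetCard (card_compl_SGVert A)]

lemma card_neighborSet_of_edgeStarts_eq_path (hk : 1 ≤ k) {x : ZMod (2 * k + 2)}
    (hE : edgeStarts A.1ᶜ = {x, x + 1}) :
    Nat.card ((SG (2 * k + 2) k).neighborSet A) = k + 2 := by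
  obtain ⟨hx, hx1, hx2, -, -⟩ := maximal_run_of_edgeStarts_eq (by omega) hE
  have h1 := ZMod.one_ne_zero_of_one_lt (by omega : 1 < 2 * k + 2)
  have h2 := ZMod.two_ne_zero_of_two_lt (by omega : 2 < 2 * k + 2)
  rw [card_neighborSet_SG_eq_card_meetsEdges A hk, hE, ← card_compl_SGVert A]
  simp only [MeetsEdges, forall_mem_insert, mem_singleton, forall_eq, add_assoc,
    one_add_one_eq_two]
  exact card_powersetCard_two_meeting_path hx hx1 hx2 (left_ne_add.mpr h1)
    (fun h => h1 (by linear_combination -h)) (left_ne_add.mpr h2)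

lemma exists_card_supp_eq_three_of_edgeStarts_eq_path (hk : 1 ≤ k) {x : ZMod (2 * k + 2)}
    (hE : edgeStarts A.1ᶜ = {x, x + 1}) :
    ∃ C : ((CycleGraph (2 * k + 2)).induce
        ((↑A.1 : Set (ZMod (2 * k + 2)))ᶜ)).ConnectedComponent, Nat.card C.supp = 3 := by
  obtain ⟨hx, hx1, hx2, hl, hr⟩ := maximal_run_of_edgeStarts_eq (by omega) hE
  exact ⟨_, cycleGraph_induce_card_supp_eq_three (by omega) (by simpa using hx)
    (by simpa using hx1) (by simpa using hx2) (by simpa using hl) (by simpa using hr)⟩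

lemma card_neighborSet_of_edgeStarts_eq_disjoint (hk : 1 ≤ k) {e f : ZMod (2 * k + 2)}
    (hE : edgeStarts A.1ᶜ = {e, f}) (hef : e ≠ f) (hfe : f ≠ e + 1) (hef' : e ≠ f + 1) :
    Nat.card ((SG (2 * k + 2) k).neighborSet A) = 4 := by
  have he := mem_edgeStarts.mp (hE ▸ mem_insert_self e {f})
  have hf := mem_edgeStarts.mp (hE ▸ mem_insert_of_mem (mem_singleton_self f))
  have h1 := ZMod.one_ne_zero_of_one_lt (by omega : 1 < 2 * k + 2)
  have hdisj : Disjoint ({e, e + 1} : Finset _) {f, f + 1} := by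
    rw [disjoint_left]
    intro a ha hb
    simp only [mem_insert, mem_singleton] at ha hb
    rcases ha with rfl | rfl <;> rcases hb with h | h
    · exact hef h
    · exact hef' h
    · exact hfe h.symm
    · exact hef (add_right_cancel h)
  have hcount := card_powersetCard_two_meeting_disjoint
    (insert_subset he.1 (singleton_subset_iff.mpr he.2))
    (insert_subset hf.1 (singleton_subset_iff.mpr hf.2)) hdisj
  simp only [exists_mem_insert, mem_singleton, exists_eq_left] at hcount
  rw [card_neighborSet_SG_eq_card_meetsEdges A hk, hE]
  simp only [MeetsEdges, forall_mem_insert, mem_singleton, forall_eq]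
  rw [hcount, card_pair (left_ne_add.mpr h1), card_pair (left_ne_add.mpr h1)]

end SchrijverGraph

theorem stmt19 (k : ℕ) (hk : 1 ≤ k) (A : SGVert (2 * k + 2) k) :
    ((∃ C : ((CycleGraph (2 * k + 2)).induce
        ((↑A.1 : Set (ZMod (2 * k + 2)))ᶜ)).ConnectedComponent, Nat.card C.supp = 3) →
      Nat.card ((SG (2 * k + 2) k).neighborSet A) = k + 2) ∧
    ((¬ ∃ C : ((CycleGraph (2 * k + 2)).induce
        ((↑A.1 : Set (ZMod (2 * k + 2)))ᶜ)).ConnectedComponent, Nat.card C.supp = 3) →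
      Nat.card ((SG (2 * k + 2) k).neighborSet A) = 4) := by
  obtain ⟨e, f, hef, hE⟩ := card_eq_two.mp (card_edgeStarts_compl_SGVert A)
  by_cases hpath : f = e + 1 ∨ e = f + 1
  · obtain ⟨x, hx⟩ : ∃ x, edgeStarts A.1ᶜ = {x, x + 1} := by
      rcases hpath with rfl | rfl
      exacts [⟨e, hE⟩, ⟨f, hE.trans (pair_comm _ _)⟩]
    exact ⟨fun _ => card_neighborSet_of_edgeStarts_eq_path A hk hx,
      fun h => absurd (exists_card_supp_eq_three_of_edgeStarts_eq_path A hk hx) h⟩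
  · rw [not_or] at hpath
    refine ⟨fun ⟨C, hC⟩ => ?_,
      fun _ => card_neighborSet_of_edgeStarts_eq_disjoint A hk hE hef hpath.1 hpath.2⟩
    have hrun : ∀ x ∈ (↑A.1 : Set (ZMod (2 * k + 2)))ᶜ, x + 1 ∈ (↑A.1 : Set _)ᶜ →
        x + 2 ∉ (↑A.1 : Set (ZMod (2 * k + 2)))ᶜ := fun x hx hx1 => by
      simpa using add_two_notMem_of_edgeStarts_eq (by omega) hE hpath.1 hpath.2
        (by simpa using hx) (by simpa using hx1)
    have := C.ncard_supp_le_two (cycleGraph_induce_neighborSet_subsingleton hrun)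
    rw [Nat.card_coe_set_eq] at hC
    omega
end
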